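/- Let 0 < ϰ < π/2 and Q_ϰ = {z ∈ ℂ : z ≠ 0, |arg z − π/2| ≥ ϰ, |arg z + π/2| ≥ ϰ}. Then there is C > 0 such that for all κ ∈ Q_ϰ with |κ| ≤ 1 and all l ≥ 1, one has |κ e^{−κl} / cosh(κl)| ≤ C(|κ| + 1/l). -/

import Mathlib

/-!
Write `κ e^{-κl} / cosh (κl) = 2κ / (e^{2κl} + 1)`. For `x = Re w` one has
`|e^w + 1| ≥ |e^x - 1| ≥ |x| / (1 + |x|)`, so the quotient is at most `2|κ| + |κ| / (l |Re κ|)`.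
In the sector `Q_ϰ`, `|Re κ| ≥ sin ϰ · |κ|`, which bounds it by `2|κ| + 1 / (l sin ϰ)`.
-/

open Complex Real

theorem Real.sin_le_abs_cos_of_le_abs_sub_pi_div_two {ϰ θ : ℝ} (hϰ : -(π / 2) ≤ ϰ)
    (hθ₀ : 0 ≤ θ) (hθπ : θ ≤ π) (h : ϰ ≤ |θ - π / 2|) :
    Real.sin ϰ ≤ |Real.cos θ| := by
  rw [← Real.sin_pi_div_two_sub]
  rw [abs_sub_comm] at h
  rcases le_total 0 (π / 2 - θ) with ht | ht
  · rw [abs_of_nonneg ht] at h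
    exact (Real.sin_le_sin_of_le_of_le_pi_div_two hϰ (by linarith) h).trans (le_abs_self _)
  · rw [abs_of_nonpos ht] at h
    rw [← abs_neg, ← Real.sin_neg]
    exact (Real.sin_le_sin_of_le_of_le_pi_div_two hϰ (by linarith) h).trans (le_abs_self _)

theorem Complex.sin_mul_norm_le_abs_re {ϰ : ℝ} {κ : ℂ} (hϰ : -(π / 2) ≤ ϰ)
    (h₁ : ϰ ≤ |arg κ - π / 2|) (h₂ : ϰ ≤ |arg κ + π / 2|) : Real.sin ϰ * ‖κ‖ ≤ |κ.re| := by
  rw [← norm_mul_cos_arg, abs_mul, abs_norm, mul_comm]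
  gcongr
  rcases le_total 0 (arg κ) with h | h
  · exact Real.sin_le_abs_cos_of_le_abs_sub_pi_div_two hϰ h (arg_le_pi κ) h₁
  · rw [← Real.cos_neg]
    refine Real.sin_le_abs_cos_of_le_abs_sub_pi_div_two hϰ (neg_nonneg.2 h)
      (by linarith [neg_pi_lt_arg κ]) ?_
    rwa [show -arg κ - π / 2 = -(arg κ + π / 2) by ring, abs_neg]

theorem Real.abs_div_one_add_abs_le_abs_exp_sub_one (x : ℝ) :
    |x| / (1 + |x|) ≤ |Real.exp x - 1| := by
  rcases le_total 0 x with hx | hx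
  · have := Real.add_one_le_exp x
    rw [abs_of_nonneg hx, abs_of_nonneg (by linarith)]
    exact (div_le_self hx (by linarith)).trans (by linarith)
  · have hexp : (1 - x) * Real.exp x ≤ 1 := by
      calc (1 - x) * Real.exp x ≤ Real.exp (-x) * Real.exp x := by
            gcongr; linarith [Real.add_one_le_exp (-x)]
        _ = 1 := by rw [← Real.exp_add]; simp
    rw [abs_of_nonpos hx, abs_of_nonpos (sub_nonpos.2 (Real.exp_le_one_iff.2 hx)),
      div_le_iff₀ (by linarith)]
    nlinarith

theorem Complex.norm_exp_add_one_inv_le {w : ℂ} (hw : w.re ≠ 0) :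
    ‖exp w + 1‖⁻¹ ≤ 1 + |w.re|⁻¹ := by
  have hx : 0 < |w.re| := abs_pos.2 hw
  have key : |w.re| / (1 + |w.re|) ≤ ‖exp w + 1‖ :=
    calc |w.re| / (1 + |w.re|) ≤ |Real.exp w.re - 1| :=
          Real.abs_div_one_add_abs_le_abs_exp_sub_one _
      _ = |‖exp w‖ - ‖(-1 : ℂ)‖| := by simp [norm_exp]
      _ ≤ ‖exp w + 1‖ := by simpa using abs_norm_sub_norm_le (exp w) (-1)
  calc ‖exp w + 1‖⁻¹ ≤ (|w.re| / (1 + |w.re|))⁻¹ := inv_anti₀ (by positivity) key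
    _ = 1 + |w.re|⁻¹ := by field_simp; ring

theorem Complex.exp_neg_div_cosh (z : ℂ) : exp (-z) / cosh z = 2 / (exp (2 * z) + 1) := by
  have : cosh z = exp (-z) * (exp (2 * z) + 1) / 2 := by
    rw [cosh, mul_add, ← exp_add]
    ring_nf
  rw [this, div_div_eq_mul_div, mul_div_mul_left _ _ (exp_ne_zero _)]

theorem Complex.norm_mul_exp_neg_div_cosh_le (κ : ℂ) {l : ℝ} (hl : 0 < l) (hre : κ.re ≠ 0) :
    ‖κ * exp (-(κ * l)) / cosh (κ * l)‖ ≤ 2 * ‖κ‖ + ‖κ‖ / (l * |κ.re|) := by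
  have hre₂ : (2 * (κ * l)).re = 2 * l * κ.re := by
    simp only [mul_re, re_ofNat, ofReal_re, ofReal_im, mul_zero, sub_zero, im_ofNat, mul_im,
      zero_add, zero_mul]
    ring
  have hinv := norm_exp_add_one_inv_le (w := 2 * (κ * l)) (by rw [hre₂]; positivity)
  rw [hre₂] at hinv
  calc ‖κ * exp (-(κ * l)) / cosh (κ * l)‖ = 2 * ‖κ‖ * ‖exp (2 * (κ * l)) + 1‖⁻¹ := by
        rw [mul_div_assoc, exp_neg_div_cosh, norm_mul, norm_div, div_eq_mul_inv, norm_ofNat]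
        ring
    _ ≤ 2 * ‖κ‖ * (1 + |2 * l * κ.re|⁻¹) := by gcongr
    _ = 2 * ‖κ‖ + ‖κ‖ / (l * |κ.re|) := by
        rw [abs_mul, abs_mul, abs_two, abs_of_pos hl]
        field_simp

theorem kappa_exp_div_cosh_bound (ϰ : ℝ) (hϰ0 : 0 < ϰ) (hϰ : ϰ < π / 2) :
    ∃ C > (0:ℝ), ∀ (κ : ℂ) (l : ℝ), κ ≠ 0 →
      ϰ ≤ |Complex.arg κ - π / 2| → ϰ ≤ |Complex.arg κ + π / 2| →
      ‖κ‖ ≤ 1 → 1 ≤ l →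
      ‖κ * Complex.exp (-(κ * l)) / Complex.cosh (κ * l)‖ ≤
        C * (‖κ‖ + 1 / l) := by
  have hs : 0 < Real.sin ϰ := Real.sin_pos_of_pos_of_lt_pi hϰ0 (by linarith [Real.pi_pos])
  refine ⟨2 + 1 / Real.sin ϰ, by positivity, fun κ l _ h₁ h₂ _ hl => ?_⟩
  have hl₀ : 0 < l := by linarith
  have hre : Real.sin ϰ * ‖κ‖ ≤ |κ.re| := sin_mul_norm_le_abs_re (by linarith) h₁ h₂
  have hre₀ : 0 < |κ.re| := (by positivity : 0 < Real.sin ϰ * ‖κ‖).trans_le hre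
  calc ‖κ * exp (-(κ * l)) / cosh (κ * l)‖ ≤ 2 * ‖κ‖ + ‖κ‖ / (l * |κ.re|) :=
        norm_mul_exp_neg_div_cosh_le κ hl₀ (abs_pos.1 hre₀)
    _ ≤ 2 * ‖κ‖ + 1 / (Real.sin ϰ * l) := by
        have : ‖κ‖ / (l * |κ.re|) ≤ 1 / (Real.sin ϰ * l) := by
          rw [div_le_div_iff₀ (by positivity) (by positivity)]
          nlinarith
        linarith
    _ ≤ (2 + 1 / Real.sin ϰ) * (‖κ‖ + 1 / l) := by
        have : 0 ≤ 2 * Real.sin ϰ + ‖κ‖ * l := by positivity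
        field_simp
        linarith
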